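/- Let 0 < ω < 2π and S_ω := {(r cos θ, r sin θ) : r > 0, 0 < θ < ω} ⊆ ℝ². For every point p ∈ S_ω there exists a continuously differentiable path γ : [0, 1] → ℝ² ∖ {0} with γ(0) = p, γ(t) ∈ S_ω for all t ∈ [0, 1), γ(1) in the topological boundary of S_ω, and ∫₀¹ |γ(t)|^{-1} |γ'(t)| dt ≤ 2π. (In other words, with respect to the conformally rescaled metric g = |x|^{-2} g_E on the sector, every point lies at g-distance at most 2π from the boundary: the pair (S_ω, ∂S_ω, g) has finite width; this is the finite-width property for a conical point with λ = 1.) -/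

import Mathlib

/-!
Write `p = (r cos θ, r sin θ)` with `0 < θ < ω` and rotate `p` back to the ray of angle `0` along
the circle of radius `r`. On that circle `|γ| = r` and `|γ'| = rθ`, so the `|x|⁻² g_E`-length
of the arc is `θ < ω < 2π`; its endpoint `(r, 0)` is a limit of sector points, but is not
itself in the sector because `ω ≤ 2π`.
-/

open MeasureTheory Real Set

/-- The open planar sector `S_ω = {(r cos θ, r sin θ) : r > 0, 0 < θ < ω}` of opening `ω`. -/
def planarSector (ω : ℝ) : Set (EuclideanSpace ℝ (Fin 2)) :=
  {x | ∃ r θ : ℝ, 0 < r ∧ 0 < θ ∧ θ < ω ∧ x 0 = r * Real.cos θ ∧ x 1 = r * Real.sin θ}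

noncomputable def polar (r θ : ℝ) : EuclideanSpace ℝ (Fin 2) :=
  (r * cos θ) • EuclideanSpace.single 0 1 + (r * sin θ) • EuclideanSpace.single 1 1

@[simp] lemma polar_apply_zero (r θ : ℝ) : polar r θ 0 = r * cos θ := by simp [polar]

@[simp] lemma polar_apply_one (r θ : ℝ) : polar r θ 1 = r * sin θ := by simp [polar]

lemma norm_polar (r θ : ℝ) : ‖polar r θ‖ = |r| := by
  rw [EuclideanSpace.norm_eq, Fin.sum_univ_two, polar_apply_zero, polar_apply_one,
    ← sqrt_sq_eq_abs]
  congr 1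
  simp only [Real.norm_eq_abs, sq_abs]
  linear_combination r ^ 2 * sin_sq_add_cos_sq θ

lemma contDiff_polar (r : ℝ) {n : WithTop ℕ∞} : ContDiff ℝ n (polar r) := by
  unfold polar
  fun_prop

lemma hasDerivAt_polar (r θ : ℝ) : HasDerivAt (polar r) (polar r (θ + π / 2)) θ := by
  refine (((hasDerivAt_cos θ).const_mul r).smul_const _ |>.add
    (((hasDerivAt_sin θ).const_mul r).smul_const _)).congr_deriv ?_
  simp [polar, cos_add_pi_div_two, sin_add_pi_div_two]

lemma polar_mem_planarSector {ω r θ : ℝ} (hr : 0 < r) (hθ : θ ∈ Ioo 0 ω) :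
    polar r θ ∈ planarSector ω :=
  ⟨r, θ, hr, hθ.1, hθ.2, polar_apply_zero r θ, polar_apply_one r θ⟩

lemma exists_polar_eq_of_mem_planarSector {ω : ℝ} {p : EuclideanSpace ℝ (Fin 2)}
    (hp : p ∈ planarSector ω) : ∃ r θ, 0 < r ∧ θ ∈ Ioo 0 ω ∧ polar r θ = p := by
  obtain ⟨r, θ, hr, hθ0, hθω, hp0, hp1⟩ := hp
  refine ⟨r, θ, hr, ⟨hθ0, hθω⟩, ?_⟩
  ext i
  fin_cases i <;> simp [hp0, hp1]

lemma polar_zero_notMem_planarSector {ω r : ℝ} (hr : 0 ≤ r) (hω : ω ≤ 2 * π) :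
    polar r 0 ∉ planarSector ω := by
  rintro ⟨r', θ, hr', hθ0, hθω, h0, h1⟩
  simp only [polar_apply_zero, polar_apply_one, cos_zero, sin_zero, mul_one, mul_zero] at h0 h1
  -- the only angle in `(0, 2π)` on the horizontal axis is `π`, which points the wrong way
  have hθ : θ = π := by
    have hsin : sin (θ - π) = 0 := by
      rw [sin_sub_pi, (mul_eq_zero.1 h1.symm).resolve_left hr'.ne', neg_zero]
    linarith [(sin_eq_zero_iff_of_lt_of_lt (by linarith) (by linarith)).1 hsin]
  rw [hθ, cos_pi] at h0
  linarith

lemma polar_zero_mem_frontier_planarSector {ω r : ℝ} (hr : 0 < r) (hω0 : 0 < ω)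
    (hω : ω ≤ 2 * π) : polar r 0 ∈ frontier (planarSector ω) := by
  refine ⟨mem_closure_of_tendsto ((hasDerivAt_polar r 0).continuousAt.tendsto
    |>.mono_left (nhdsWithin_le_nhds (s := Ioi 0))) ?_, fun h ↦
      polar_zero_notMem_planarSector hr.le hω (interior_subset h)⟩
  filter_upwards [Ioo_mem_nhdsGT hω0] with θ hθ
  exact polar_mem_planarSector hr hθ

lemma hasDerivAt_polar_mul_one_sub (r θ t : ℝ) :
    HasDerivAt (fun t ↦ polar r ((1 - t) * θ)) ((-θ) • polar r ((1 - t) * θ + π / 2)) t := by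
  have h : HasDerivAt (fun t : ℝ ↦ (1 - t) * θ) (-θ) t := by
    simpa using ((hasDerivAt_id t).const_sub 1).mul_const θ
  exact (hasDerivAt_polar r _).scomp t h

lemma integral_norm_inv_mul_norm_deriv_polar_mul_one_sub {r : ℝ} (hr : r ≠ 0) (θ : ℝ) :
    ∫ t in (0 : ℝ)..1, ‖polar r ((1 - t) * θ)‖⁻¹ * ‖deriv (fun t ↦ polar r ((1 - t) * θ)) t‖
      = |θ| := by
  have h : ∀ t : ℝ, ‖polar r ((1 - t) * θ)‖⁻¹ * ‖deriv (fun t ↦ polar r ((1 - t) * θ)) t‖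
      = |θ| := fun t ↦ by
    rw [(hasDerivAt_polar_mul_one_sub r θ t).deriv, norm_smul, norm_polar, norm_polar,
      Real.norm_eq_abs, abs_neg]
    field_simp [abs_ne_zero.2 hr]
  simp [h]

theorem sector_finite_width_general (ω : ℝ) (hω : ω < 2 * π)
    (p : EuclideanSpace ℝ (Fin 2)) (hp : p ∈ planarSector ω) :
    ∃ γ : ℝ → EuclideanSpace ℝ (Fin 2), ContDiffOn ℝ 1 γ (Icc 0 1) ∧
      γ 0 = p ∧ (∀ t ∈ Ico (0 : ℝ) 1, γ t ∈ planarSector ω) ∧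
      γ 1 ∈ frontier (planarSector ω) ∧
      (∀ t ∈ Icc (0 : ℝ) 1, γ t ≠ 0) ∧
      ∫ t in (0 : ℝ)..1, ‖γ t‖⁻¹ * ‖deriv γ t‖ ≤ 2 * π := by
  obtain ⟨r, θ, hr, hθ, rfl⟩ := exists_polar_eq_of_mem_planarSector hp
  refine ⟨fun t ↦ polar r ((1 - t) * θ), ((contDiff_polar r).comp (by fun_prop)).contDiffOn,
    by simp, ?_, ?_, ?_, ?_⟩
  · rintro t ⟨ht0, ht1⟩
    exact polar_mem_planarSector hr ⟨by nlinarith [hθ.1], by nlinarith [hθ.1, hθ.2]⟩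
  · simpa using polar_zero_mem_frontier_planarSector hr (hθ.1.trans hθ.2) hω.le
  · intro t _
    rw [← norm_ne_zero_iff, norm_polar]
    exact abs_ne_zero.2 hr.ne'
  · rw [integral_norm_inv_mul_norm_deriv_polar_mul_one_sub hr.ne', abs_of_pos hθ.1]
    linarith [hθ.2]

/-- **Finite width of a sector in the conformally rescaled metric `g = |x|⁻² g_E`.** For
`0 < ω < 2π`, every point `p` of the sector `S_ω` can be joined to the boundary by a `C¹` path
`γ` avoiding the origin whose length `∫₀¹ |γ(t)|⁻¹ |γ'(t)| dt` in the metric `|x|⁻² g_E` is at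
most `2π`. -/
theorem sector_finite_width (ω : ℝ) (hω0 : 0 < ω) (hω : ω < 2 * π)
    (p : EuclideanSpace ℝ (Fin 2)) (hp : p ∈ planarSector ω) :
    ∃ γ : ℝ → EuclideanSpace ℝ (Fin 2), ContDiffOn ℝ 1 γ (Icc 0 1) ∧
      γ 0 = p ∧ (∀ t ∈ Ico (0 : ℝ) 1, γ t ∈ planarSector ω) ∧
      γ 1 ∈ frontier (planarSector ω) ∧
      (∀ t ∈ Icc (0 : ℝ) 1, γ t ≠ 0) ∧
      ∫ t in (0 : ℝ)..1, ‖γ t‖⁻¹ * ‖deriv γ t‖ ≤ 2 * π :=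
  sector_finite_width_general ω hω p hp
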